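/- Let H be an edge-minimal 2-edge-connected multigraph (no proper spanning subgraph of H is 2-edge-connected), and let e₁, e₂ be a pair of parallel edges of H. Then H − {e₁, e₂} has exactly two connected components, and each of these components is either a single node or 2-edge-connected. -/

import Mathlib

set_option autoImplicit false

/-!  A formal framework for the Matching Augmentation Problem (MAP):
loopless multigraphs with edge costs in `{0,1}` (given by the predicate
`isZero` marking the zero-edges). -/

/-- A finite loopless multigraph together with `{0,1}` edge costs:
`isZero e` means that the edge `e` has cost zero (otherwise it is a unit-edge). -/
structure CostGraph where
  V : Type
  E : Type
  finV : Finite V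
  finE : Finite E
  ends : E → Sym2 V
  loopless : ∀ e, ¬ (ends e).IsDiag
  isZero : E → Prop

namespace CostGraph

variable (G : CostGraph)

/-- `x` and `y` are joined by an edge of `F` and both lie in the node set `S`. -/
def Adj (S : Set G.V) (F : Set G.E) (x y : G.V) : Prop :=
  x ∈ S ∧ y ∈ S ∧ ∃ e ∈ F, G.ends e = s(x, y)

/-- Reachability in the sub-multigraph with node set `S` and edge set `F`. -/
def Reachable (S : Set G.V) (F : Set G.E) (x y : G.V) : Prop :=
  Relation.ReflTransGen (G.Adj S F) x y

/-- The sub-multigraph with node set `S` and those edges of `F` having both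
end nodes in `S` is connected (in particular `S` is nonempty). -/
def ConnectedOn (S : Set G.V) (F : Set G.E) : Prop :=
  S.Nonempty ∧ ∀ x ∈ S, ∀ y ∈ S, G.Reachable S F x y

/-- The sub-multigraph with node set `S` and edge set `F` is 2-edge-connected:
it has at least two nodes and removing any one edge leaves it connected. -/
def TwoECOn (S : Set G.V) (F : Set G.E) : Prop :=
  1 < S.ncard ∧ G.ConnectedOn S F ∧ ∀ e : G.E, G.ConnectedOn S (F \ {e})

/-- `F` is the edge set of a 2-edge-connected spanning subgraph (2-ECSS) of `G`. -/
def TwoEC (F : Set G.E) : Prop := G.TwoECOn Set.univ F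

/-- The cost of a set of edges: the number of unit-edges in it. -/
noncomputable def cost (F : Set G.E) : ℕ := {e ∈ F | ¬ G.isZero e}.ncard

/-- `opt G` is the minimum cost of a 2-ECSS of `G`. -/
noncomputable def opt : ℕ := sInf (G.cost '' {F | G.TwoEC F})

/-- `F` is a 2-edge cover: every node is incident to at least two edges of `F`. -/
def TwoEdgeCover (F : Set G.E) : Prop :=
  ∀ v : G.V, 2 ≤ {e ∈ F | v ∈ G.ends e}.ncard

/-- `tau G` is the minimum cost of a 2-edge cover of `G`. -/
noncomputable def tau : ℕ := sInf (G.cost '' {F | G.TwoEdgeCover F})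

/-- The zero-edges form a matching: no two distinct zero-edges share an end node. -/
def ZeroMatching : Prop :=
  ∀ e f : G.E, G.isZero e → G.isZero f → e ≠ f → ∀ x : G.V, x ∈ G.ends e → x ∉ G.ends f

/-- A MAP instance: a (finite, loopless) multigraph with `{0,1}` edge costs whose
zero-edges form a matching and which is 2-edge-connected. -/
def IsMAP : Prop := G.ZeroMatching ∧ G.TwoEC Set.univ

/-- The degree of a node: the number of edges incident to it. -/
noncomputable def degree (v : G.V) : ℕ := {e : G.E | v ∈ G.ends e}.ncard

/-- `e, f` form a `{0,1}`-edge-pair: parallel edges, `e` of cost zero, `f` of cost one. -/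
def IsZeroOnePair (e f : G.E) : Prop :=
  e ≠ f ∧ G.ends e = G.ends f ∧ G.isZero e ∧ ¬ G.isZero f

/-- `G` has no `{0,1}`-edge-pairs. -/
def NoZeroOnePair : Prop := ∀ e f, ¬ G.IsZeroOnePair e f

/-- `v` is a cut node: deleting `v` leaves a disconnected (or empty) graph. -/
def IsCutNode (v : G.V) : Prop := ¬ G.ConnectedOn ({v}ᶜ) Set.univ

/-- `{v, w}` is a bad-pair: `vw` is a zero-edge and deleting both `v` and `w`
disconnects the graph. -/
def IsBadPair (v w : G.V) : Prop :=
  (∃ e, G.isZero e ∧ G.ends e = s(v, w)) ∧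
    ¬ G.ConnectedOn (({v, w} : Set G.V)ᶜ) Set.univ

/-- The number of bad-pairs of `G` (counted as unordered pairs). -/
noncomputable def badPairCount : ℕ :=
  {z : Sym2 G.V | ∃ a b, z = s(a, b) ∧ G.IsBadPair a b}.ncard

/-- `C` is (the node set of) a connected component of the sub-multigraph with node
set `S` and edge set `F`. -/
def IsCompOf (S : Set G.V) (F : Set G.E) (C : Set G.V) : Prop :=
  C ⊆ S ∧ C.Nonempty ∧ G.ConnectedOn C F ∧
    ∀ x ∈ C, ∀ y ∈ S, G.Adj S F x y → y ∈ C

/-- `Q` is the node set of a redundant 4-cycle: a 4-cycle `u₁u₂u₃u₄` with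
`V(C) ≠ V(G)`, two non-adjacent edges of cost zero and two non-adjacent nodes
of degree two in `G`. -/
def IsRed4CycleOn (Q : Set G.V) : Prop :=
  ∃ (u₁ u₂ u₃ u₄ : G.V) (e₁ e₂ e₃ e₄ : G.E),
    Q = {u₁, u₂, u₃, u₄} ∧
    u₁ ≠ u₂ ∧ u₁ ≠ u₃ ∧ u₁ ≠ u₄ ∧ u₂ ≠ u₃ ∧ u₂ ≠ u₄ ∧ u₃ ≠ u₄ ∧
    e₁ ≠ e₂ ∧ e₁ ≠ e₃ ∧ e₁ ≠ e₄ ∧ e₂ ≠ e₃ ∧ e₂ ≠ e₄ ∧ e₃ ≠ e₄ ∧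
    G.ends e₁ = s(u₁, u₂) ∧ G.ends e₂ = s(u₂, u₃) ∧
    G.ends e₃ = s(u₃, u₄) ∧ G.ends e₄ = s(u₄, u₁) ∧
    G.isZero e₁ ∧ G.isZero e₃ ∧
    G.degree u₂ = 2 ∧ G.degree u₄ = 2 ∧
    Q ≠ Set.univ

/-- A well-structured MAP instance: no `{0,1}`-edge-pairs, no redundant 4-cycles,
no cut nodes and no bad-pairs. -/
def WellStructured : Prop :=
  G.IsMAP ∧ G.NoZeroOnePair ∧ (∀ Q, ¬ G.IsRed4CycleOn Q) ∧
    (∀ v, ¬ G.IsCutNode v) ∧ (∀ v w, ¬ G.IsBadPair v w)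

/-- `G` is 2-node-connected: more than two nodes and deleting any one node
leaves a connected graph. -/
def TwoNC : Prop :=
  2 < Nat.card G.V ∧ ∀ v : G.V, G.ConnectedOn ({v}ᶜ) Set.univ

/-- Bridge of the sub-multigraph with node set `S` and edge set `F`: an edge of `F`
inside `S` whose removal disconnects its end nodes. -/
def IsBridgeOn (S : Set G.V) (F : Set G.E) (e : G.E) : Prop :=
  e ∈ F ∧ (∀ x ∈ G.ends e, x ∈ S) ∧
    ∀ x y, G.ends e = s(x, y) → ¬ G.Reachable S (F \ {e}) x y

/-- Bridge of the spanning subgraph `(V, F)`. -/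
def IsBridge (F : Set G.E) (e : G.E) : Prop := G.IsBridgeOn Set.univ F e

/-- `B` is (the node set of) a 2ec-block of the spanning subgraph `(V, F)`:
a maximal connected bridgeless subgraph with at least two nodes, equivalently a
connected component with at least two nodes of the graph obtained by deleting
all bridges. -/
def IsTwoECBlock (F : Set G.E) (B : Set G.V) : Prop :=
  G.IsCompOf Set.univ (F \ {e | G.IsBridge F e}) B ∧ 2 ≤ B.ncard

/-- Delete a set `D` of edges. -/
noncomputable def deleteEdges (D : Set G.E) : CostGraph where
  V := G.V
  E := {e : G.E // e ∉ D}
  finV := G.finV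
  finE := by haveI := G.finE; exact Subtype.finite
  ends e := G.ends e.1
  loopless e := G.loopless e.1
  isZero e := G.isZero e.1

/-- The sub-instance induced on a set `S` of nodes. -/
noncomputable def induce (S : Set G.V) : CostGraph where
  V := ↥S
  E := {e : G.E // ∀ x ∈ G.ends e, x ∈ S}
  finV := by haveI := G.finV; exact Subtype.finite
  finE := by haveI := G.finE; exact Subtype.finite
  ends e := (G.ends e.1).pmap Subtype.mk e.2
  loopless e := by
    intro hd
    exact G.loopless e.1
      (by simpa [Sym2.pmap_subtype_map_subtypeVal] using hd.map (f := Subtype.val))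
  isZero e := G.isZero e.1

/-- Contraction of `G` along (the equivalence generated by) a relation `R`:
node classes are identified, and edges joining identified nodes are removed
(no loops are created). -/
noncomputable def contract (R : G.V → G.V → Prop) : CostGraph where
  V := Quotient (Relation.EqvGen.setoid R)
  E := {e : G.E // ¬ (Sym2.map (Quotient.mk (Relation.EqvGen.setoid R)) (G.ends e)).IsDiag}
  finV := by haveI := G.finV; exact Quotient.finite _
  finE := by haveI := G.finE; exact Subtype.finite
  ends e := Sym2.map (Quotient.mk (Relation.EqvGen.setoid R)) (G.ends e.1)
  loopless e := e.2
  isZero e := G.isZero e.1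

/-- The relation identifying the nodes of each redundant 4-cycle. -/
def red4Rel (x y : G.V) : Prop := ∃ Q, G.IsRed4CycleOn Q ∧ x ∈ Q ∧ y ∈ Q

/-- The multigraph obtained from `G` by contracting all redundant 4-cycles. -/
noncomputable def contractRed4 : CostGraph := G.contract G.red4Rel

/-- For a bad-pair `{v,w}` and a bp-component `C`: the sub-instance `C^{v,w}`
induced on `V(C) ∪ {v, w}`. -/
noncomputable def bpUp (v w : G.V) (C : Set G.V) : CostGraph :=
  G.induce (C ∪ {v, w})

/-- For a bad-pair `{v,w}` and a bp-component `C`: the instance `C^⊘`, obtained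
from `C^{v,w}` by contracting the zero-edge `vw` if `C` has at least two nodes,
and equal to `C^{v,w}` if `C` has exactly one node. -/
noncomputable def bpContr (v w : G.V) (C : Set G.V) : CostGraph :=
  if 2 ≤ C.ncard then
    (G.bpUp v w C).contract (fun x y => x.1 = v ∧ y.1 = w)
  else G.bpUp v w C

/-- Every edge of `C^⊘` is an edge of `G`. -/
noncomputable def bpContrEdge (v w : G.V) (C : Set G.V) :
    (G.bpContr v w C).E → G.E := by
  unfold bpContr
  by_cases h : 2 ≤ C.ncard
  · rw [if_pos h]; exact fun e => e.1.1
  · rw [if_neg h]; exact fun e => e.1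

/-- The sub-multigraph `(S, F)` is 2-node-connected. -/
def TwoNCOn (S : Set G.V) (F : Set G.E) : Prop :=
  2 < S.ncard ∧ ∀ v : G.V, G.ConnectedOn (S \ {v}) F

/-- The sub-multigraph `(S, F)` consists of two nodes joined by two parallel edges. -/
def IsParallelPairBlock (S : Set G.V) (F : Set G.E) : Prop :=
  S.ncard = 2 ∧ ∃ e f, e ≠ f ∧ G.ends e = G.ends f ∧ F = {e, f}

/-- `(B i, F i)` (for `i : Fin k`) are the blocks of `G`: each block is 2-node-connected
or a pair of nodes joined by two parallel edges, the edge set of `G` is partitioned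
among the blocks, each `B i` is the set of end nodes of the edges of `F i`, and any
two blocks share at most one node. -/
def IsBlockDecomp {k : ℕ} (B : Fin k → Set G.V) (F : Fin k → Set G.E) : Prop :=
  (∀ i, ∀ e ∈ F i, ∀ x ∈ G.ends e, x ∈ B i) ∧
  (∀ i, B i = {x | ∃ e ∈ F i, x ∈ G.ends e}) ∧
  (Set.univ : Set G.E) = ⋃ i, F i ∧
  (∀ i j, i ≠ j → Disjoint (F i) (F j)) ∧
  (∀ i j, i ≠ j → (B i ∩ B j).ncard ≤ 1) ∧
  (∀ i, G.TwoNCOn (B i) (F i) ∨ G.IsParallelPairBlock (B i) (F i))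

end CostGraph

/-- `TauHatRel G t` holds when `t` is a value of `τ̂` for `G`, i.e. a value obtainable
by the following recursion: if `G` has no redundant 4-cycles and no cut nodes
(so it is well-structured provided it has no `{0,1}`-edge-pairs and no bad-pairs)
then `τ̂(G) = τ(G)`; otherwise contract all (`q`, say) redundant 4-cycles of `G`,
split the resulting graph at its cut nodes into its blocks `G₁, …, G_k`, and set
`τ̂(G) = 2q + τ̂(G₁) + … + τ̂(G_k)`. -/
inductive TauHatRel : CostGraph → ℕ → Prop where
  | base (G : CostGraph)
      (h4 : ∀ Q, ¬ G.IsRed4CycleOn Q) (hc : ∀ v, ¬ G.IsCutNode v) :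
      TauHatRel G G.tau
  | step (G : CostGraph) (k : ℕ)
      (B : Fin k → Set G.contractRed4.V) (F : Fin k → Set G.contractRed4.E)
      (t : Fin k → ℕ)
      (hobstr : (∃ Q, G.IsRed4CycleOn Q) ∨ (∃ v, G.IsCutNode v))
      (hdec : G.contractRed4.IsBlockDecomp B F)
      (ht : ∀ i, TauHatRel (G.contractRed4.induce (B i)) (t i)) :
      TauHatRel G (2 * {Q | G.IsRed4CycleOn Q}.ncard + ∑ i, t i)

namespace CostGraph

/-- `τ̂(G)`: the value associated to `G` by the recursion of `TauHatRel`. -/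
noncomputable def tauHat (G : CostGraph) : ℕ := sInf {t | TauHatRel G t}

open Classical in
/-- The lower bound `lb(G)`: `τ̂(G)` if `G` has no `{0,1}`-edge-pairs, no cut nodes
and no bad-pairs, and `opt(G)` otherwise. -/
noncomputable def lb (G : CostGraph) : ℕ :=
  if G.NoZeroOnePair ∧ (∀ v, ¬ G.IsCutNode v) ∧ (∀ v w, ¬ G.IsBadPair v w)
  then G.tauHat else G.opt

end CostGraph

/-! Let `e₁, e₂` join `u` and `v`. If `u` and `v` were still joined in `H − {e₁, e₂}`, then
`e₂` could be dropped from `H` without losing 2-edge-connectivity (its ends stay joined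
through `e₁` or through that path), contradicting minimality. Since `H − e₂` is connected,
every node is joined to `u` or to `v` in `H − {e₁, e₂}`, so there are exactly the two
components of `u` and of `v`. Each component `D` meets the removed edges only in one node,
so any walk of `H − f` between two nodes of `D` can be shortcut at that node to stay in `D`;
hence `D` is 2-edge-connected as soon as it has two nodes. -/

namespace CostGraph

variable {G : CostGraph} {S S' : Set G.V} {F F' : Set G.E} {x y : G.V}

theorem Adj.symm (h : G.Adj S F x y) : G.Adj S F y x :=
  ⟨h.2.1, h.1, h.2.2.imp fun _ he => ⟨he.1, he.2.trans Sym2.eq_swap⟩⟩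

theorem Reachable.symm (h : G.Reachable S F x y) : G.Reachable S F y x :=
  Relation.ReflTransGen.mono (fun _ _ => Adj.symm) _ _ (Relation.ReflTransGen.swap _ _ h)

theorem Reachable.trans {z : G.V} (h : G.Reachable S F x y) (h' : G.Reachable S F y z) :
    G.Reachable S F x z :=
  Relation.ReflTransGen.trans h h'

theorem Reachable.of_ends {e : G.E} {a b : G.V} (he : G.ends e = s(a, b))
    (hab : G.Reachable S F a b) {p q : G.V} (hpq : G.ends e = s(p, q)) :
    G.Reachable S F p q := by
  rcases Sym2.eq_iff.mp (he.symm.trans hpq) with ⟨rfl, rfl⟩ | ⟨rfl, rfl⟩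
  · exact hab
  · exact hab.symm

theorem Reachable.diff_singleton (h : G.Reachable S F x y) {e : G.E} {a b : G.V}
    (he : G.ends e = s(a, b)) (hab : G.Reachable S (F \ {e}) a b) :
    G.Reachable S (F \ {e}) x y := by
  refine Relation.reflTransGen_closed (fun p q ⟨hp, hq, g, hgF, hg⟩ => ?_) _ _ h
  by_cases hge : g = e
  · subst hge
    exact hab.of_ends he hg
  · exact .single ⟨hp, hq, g, ⟨hgF, hge⟩, hg⟩

theorem ConnectedOn.diff_singleton {e : G.E} {a b : G.V} (hc : G.ConnectedOn S F)
    (he : G.ends e = s(a, b)) (hab : G.Reachable S (F \ {e}) a b) :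
    G.ConnectedOn S (F \ {e}) :=
  ⟨hc.1, fun x hx y hy => (hc.2 x hx y hy).diff_singleton he hab⟩

theorem Reachable.diff_singleton_or {e : G.E} {u v : G.V} (he : G.ends e = s(u, v))
    (h : G.Reachable S F u x) :
    G.Reachable S (F \ {e}) u x ∨ G.Reachable S (F \ {e}) v x := by
  induction h with
  | refl => exact .inl .refl
  | @tail p q _ hpq ih =>
    obtain ⟨hp, hq, g, hgF, hg⟩ := hpq
    by_cases hge : g = e
    · subst hge
      rcases Sym2.eq_iff.mp (he.symm.trans hg) with ⟨rfl, rfl⟩ | ⟨rfl, rfl⟩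
      · exact .inr .refl
      · exact .inl .refl
    · have hstep : G.Adj S (F \ {e}) p q := ⟨hp, hq, g, ⟨hgF, hge⟩, hg⟩
      exact ih.imp (·.tail hstep) (·.tail hstep)

/-- Invariant of the walk: inside `D`, its current node is joined to `x` within `D`; outside `D`,
it left through `u`, which is joined to `x` within `D`. -/
theorem Reachable.of_exits_at {D : Set G.V} {u : G.V}
    (hexit : ∀ g ∈ F, ∀ p q, G.ends g = s(p, q) → p ∈ D → q ∉ D → p = u)
    (hx : x ∈ D) (hy : y ∈ D) (h : G.Reachable Set.univ F x y) : G.Reachable D F x y := by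
  classical
  suffices ∀ z, G.Reachable Set.univ F x z → G.Reachable D F x (if z ∈ D then z else u) by
    simpa [hy] using this y h
  intro z hz
  induction hz with
  | refl => rw [if_pos hx]; exact .refl
  | @tail p q _ hpq ih =>
    obtain ⟨-, -, g, hgF, hg⟩ := hpq
    by_cases hp : p ∈ D <;> by_cases hq : q ∈ D <;> simp only [hp, hq, if_true, if_false] at ih ⊢
    · exact ih.tail ⟨hp, hq, g, hgF, hg⟩
    · exact hexit g hgF p q hg hp hq ▸ ih
    · exact hexit g hgF q p (hg.trans Sym2.eq_swap) hq hp ▸ ih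
    · exact ih

theorem Reachable.mono (hS : S ⊆ S') (hF : F ⊆ F') (h : G.Reachable S F x y) :
    G.Reachable S' F' x y :=
  Relation.ReflTransGen.mono (fun _ _ ⟨hp, hq, g, hg, hge⟩ => ⟨hS hp, hS hq, g, hF hg, hge⟩) _ _ h

def comp (F : Set G.E) (x : G.V) : Set G.V := {y | G.Reachable Set.univ F x y}

theorem mem_comp_self : x ∈ G.comp F x := Relation.ReflTransGen.refl

theorem comp_eq_comp (h : G.Reachable Set.univ F x y) : G.comp F x = G.comp F y :=
  Set.ext fun _ => ⟨h.symm.trans, h.trans⟩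

theorem reachable_comp (h : G.Reachable Set.univ F x y) : G.Reachable (G.comp F x) F x y := by
  induction h with
  | refl => exact .refl
  | @tail p q hxp hpq ih => exact ih.tail ⟨hxp, hxp.tail hpq, hpq.2.2⟩

theorem isCompOf_comp : G.IsCompOf Set.univ F (G.comp F x) := by
  refine ⟨Set.subset_univ _, ⟨x, mem_comp_self⟩, ⟨⟨x, mem_comp_self⟩, fun a ha b hb => ?_⟩,
    fun a ha b _ hab => ha.tail hab⟩
  exact (reachable_comp ha).symm.trans (reachable_comp hb)

theorem IsCompOf.eq_comp {D : Set G.V} (hD : G.IsCompOf Set.univ F D) (hx : x ∈ D) :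
    D = G.comp F x := by
  refine Set.Subset.antisymm
    (fun y hy => (hD.2.2.1.2 x hx y hy).mono (Set.subset_univ _) subset_rfl) fun y hy => ?_
  induction (hy : G.Reachable Set.univ F x y) with
  | refl => exact hx
  | @tail p q _ hpq ih => exact hD.2.2.2 p ih q trivial hpq

theorem setOf_isCompOf_eq_pair {u v : G.V}
    (h : ∀ x, G.Reachable Set.univ F u x ∨ G.Reachable Set.univ F v x) :
    {C | G.IsCompOf Set.univ F C} = {G.comp F u, G.comp F v} := by
  ext D
  refine ⟨fun hD => ?_, ?_⟩
  · obtain ⟨x, hx⟩ := hD.2.1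
    rw [hD.eq_comp hx]
    exact (h x).imp (comp_eq_comp · |>.symm) (comp_eq_comp · |>.symm)
  · rintro (rfl | rfl) <;> exact isCompOf_comp

theorem IsCompOf.twoECOn (h2 : G.TwoEC Set.univ) {D : Set G.V}
    (hD : G.IsCompOf Set.univ F D) (hcard : 1 < D.ncard) {u v : G.V}
    (hout : ∀ g ∉ F, G.ends g = s(u, v)) (hv : v ∉ D) :
    G.TwoECOn D F := by
  have hleave : ∀ g ∉ F, ∀ p q, G.ends g = s(p, q) → p ∈ D → p = u ∧ q ∉ D := by
    intro g hgF p q hg hp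
    rcases Sym2.eq_iff.mp ((hout g hgF).symm.trans hg) with ⟨rfl, rfl⟩ | ⟨rfl, rfl⟩
    · exact ⟨rfl, hv⟩
    · exact absurd hp hv
  refine ⟨hcard, hD.2.2.1, fun f => ⟨hD.2.1, fun x hx y hy => ?_⟩⟩
  have hexit : ∀ g ∈ Set.univ \ {f}, ∀ p q, G.ends g = s(p, q) → p ∈ D → q ∉ D → p = u := by
    intro g _ p q hg hp hq
    by_cases hgF : g ∈ F
    · exact absurd (hD.2.2.2 p hp q trivial ⟨trivial, trivial, g, hgF, hg⟩) hq
    · exact (hleave g hgF p q hg hp).1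
  refine Relation.ReflTransGen.mono (fun p q ⟨hp, hq, g, hg, hge⟩ => ⟨hp, hq, g, ⟨?_, hg.2⟩, hge⟩)
    _ _ ((h2.2.2 f).2 x trivial y trivial |>.of_exits_at hexit hx hy)
  by_contra hgF
  exact (hleave g hgF p q hge hp).2 hq

theorem twoEC_diff_singleton_of_parallel (h2 : G.TwoEC Set.univ) {e₁ e₂ : G.E} (hne : e₁ ≠ e₂)
    {u v : G.V} (h₁ : G.ends e₁ = s(u, v)) (h₂ : G.ends e₂ = s(u, v))
    (huv : G.Reachable Set.univ (Set.univ \ {e₁, e₂}) u v) :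
    G.TwoEC (Set.univ \ {e₂}) := by
  refine ⟨h2.1, h2.2.2 e₂, fun f => ?_⟩
  rw [Set.sdiff_sdiff_comm]
  refine (h2.2.2 f).diff_singleton h₂ ?_
  by_cases hf : f = e₁
  · rwa [hf, Set.sdiff_sdiff, ← Set.insert_eq]
  · exact .single ⟨trivial, trivial, e₁, ⟨⟨trivial, Ne.symm hf⟩, hne⟩, h₁⟩

end CostGraph

/-- Let `H` be an edge-minimal 2-edge-connected multigraph and
`e₁, e₂` a pair of parallel edges of `H`. Then `H − {e₁, e₂}` has exactly two
connected components, and each of them is a single node or 2-edge-connected. -/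
theorem parallel_pair_delete_components (H : CostGraph) (h2 : H.TwoEC Set.univ)
    (hmin : ∀ F : Set H.E, F ≠ Set.univ → ¬ H.TwoEC F)
    (e₁ e₂ : H.E) (hne : e₁ ≠ e₂) (hpar : H.ends e₁ = H.ends e₂) :
    {C | H.IsCompOf Set.univ (Set.univ \ {e₁, e₂}) C}.ncard = 2 ∧
    ∀ C, H.IsCompOf Set.univ (Set.univ \ {e₁, e₂}) C →
      C.ncard = 1 ∨ H.TwoECOn C (Set.univ \ {e₁, e₂}) := by
  obtain ⟨u, v, h₁⟩ : ∃ u v, H.ends e₁ = s(u, v) := (H.ends e₁).inductionOn fun u v => ⟨u, v, rfl⟩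
  have h₂ : H.ends e₂ = s(u, v) := hpar ▸ h₁
  have hout (g) (hg : g ∉ Set.univ \ {e₁, e₂}) : H.ends g = s(u, v) := by
    obtain rfl | rfl : g = e₁ ∨ g = e₂ := by
      simpa only [Set.mem_sdiff, Set.mem_univ, true_and, not_not, Set.mem_insert_iff,
        Set.mem_singleton_iff] using hg
    exacts [h₁, h₂]
  have hsep : ¬ H.Reachable Set.univ (Set.univ \ {e₁, e₂}) u v := fun huv =>
    hmin _ (Set.sdiff_singleton_ssubset.2 (Set.mem_univ e₂)).ne
      (H.twoEC_diff_singleton_of_parallel h2 hne h₁ h₂ huv)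
  have hcomps : {C | H.IsCompOf Set.univ (Set.univ \ {e₁, e₂}) C} = {H.comp _ u, H.comp _ v} :=
    CostGraph.setOf_isCompOf_eq_pair fun x => by
      simpa only [Set.sdiff_sdiff, Set.union_comm, ← Set.insert_eq] using
        ((h2.2.2 e₂).2 u trivial x trivial).diff_singleton_or h₁
  refine ⟨hcomps ▸ Set.ncard_pair fun h => hsep (h ▸ CostGraph.mem_comp_self : v ∈ H.comp _ u),
    fun C hC => or_iff_not_imp_left.2 fun h1 => ?_⟩
  have : Finite H.V := H.finV
  have hcard : 1 < C.ncard := by have := (Set.ncard_pos).2 hC.2.1; omega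
  rcases hcomps.subset hC with rfl | rfl
  · exact hC.twoECOn h2 hcard hout hsep
  · exact hC.twoECOn h2 hcard (fun g hg => (hout g hg).trans Sym2.eq_swap) (hsep ·.symm)
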